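/- arXiv:1304.7353 — 2 statements merged into one kernel-verified Lean document; each statement's English description precedes it below -/
import Mathlib

section
/- Let μ be a probability measure on X and λ₁, λ₂ : X → ℝ be bounded measurable functions with λᵢ ≥ κ > 0. If λ₁ = g ∘ w and λ₂ = g ∘ v for bounded functions w, v and a Lipschitz function g : ℝ → [κ, ∞) with Lipschitz constant ḡ, then ∫ λ₁ log(λ₁/λ₂) dμ − ∫ (λ₁ − λ₂) dμ ≤ (ḡ²/κ) · ‖w − v‖_∞². -/
open MeasureTheory Real

/-!
Pointwise, `log x ≤ x - 1` bounds the Kullback–Leibler integrand `a log (a / b) - (a - b)` by the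
χ²-type term `(a - b)² / b ≤ (a - b)² / κ`, and the Lipschitz property of `g` bounds
`(g (w x) - g (v x))²` by `ḡ² ‖w - v‖²_∞`. Integrating the constant bound against the
probability measure `μ` gives the claim.
-/

lemma mul_log_div_sub_sub_le_sq_div {a b : ℝ} (ha : 0 < a) (hb : 0 < b) :
    a * log (a / b) - (a - b) ≤ (a - b) ^ 2 / b := by
  have hlog : a * log (a / b) ≤ a * (a / b - 1) :=
    mul_le_mul_of_nonneg_left (log_le_sub_one_of_pos (div_pos ha hb)) ha.le
  have hsq : a * (a / b - 1) - (a - b) = (a - b) ^ 2 / b := by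
    field_simp
  linarith

lemma mul_log_div_sub_sub_le_sq_div_of_le {κ a b : ℝ} (hκ : 0 < κ) (ha : κ ≤ a) (hb : κ ≤ b) :
    a * log (a / b) - (a - b) ≤ (a - b) ^ 2 / κ :=
  (mul_log_div_sub_sub_le_sq_div (hκ.trans_le ha) (hκ.trans_le hb)).trans
    (div_le_div_of_nonneg_left (sq_nonneg _) hκ hb)

lemma sq_sub_le_of_abs_sub_le {g : ℝ → ℝ} {L : ℝ} (hg : ∀ a b, |g a - g b| ≤ L * |a - b|)
    {a b S : ℝ} (hab : |a - b| ≤ S) : (g a - g b) ^ 2 ≤ L ^ 2 * S ^ 2 :=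
  calc (g a - g b) ^ 2 = |g a - g b| ^ 2 := (sq_abs _).symm
    _ ≤ (L * |a - b|) ^ 2 := pow_le_pow_left₀ (abs_nonneg _) (hg a b) 2
    _ = L ^ 2 * |a - b| ^ 2 := mul_pow _ _ _
    _ ≤ L ^ 2 * S ^ 2 :=
      mul_le_mul_of_nonneg_left (pow_le_pow_left₀ (abs_nonneg _) hab 2) (sq_nonneg L)

lemma abs_sub_le_iSup_abs_sub {X : Type*} {w v : X → ℝ} {Cw Cv : ℝ} (hw : ∀ x, |w x| ≤ Cw)
    (hv : ∀ x, |v x| ≤ Cv) (x : X) : |w x - v x| ≤ ⨆ y, |w y - v y| :=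
  le_ciSup ⟨Cw + Cv, by
    rintro _ ⟨y, rfl⟩
    exact (abs_sub _ _).trans (add_le_add (hw y) (hv y))⟩ x

lemma integral_le_of_forall_le {X : Type*} [MeasurableSpace X] {μ : Measure X}
    [IsProbabilityMeasure μ] {f : X → ℝ} {C : ℝ} (hf : Integrable f μ) (hC : ∀ x, f x ≤ C) :
    ∫ x, f x ∂μ ≤ C := by
  simpa using integral_mono hf (integrable_const C) hC

theorem kl_le_sup_norm_sq_general {X : Type*} [MeasurableSpace X] (μ : Measure X)
    [IsProbabilityMeasure μ] (κ gbar : ℝ) (hκ : 0 < κ)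
    (g : ℝ → ℝ) (hg : ∀ a b : ℝ, |g a - g b| ≤ gbar * |a - b|)
    (hgκ : ∀ t : ℝ, κ ≤ g t)
    (w v : X → ℝ)
    (Cw : ℝ) (hw : ∀ x, |w x| ≤ Cw) (Cv : ℝ) (hv : ∀ x, |v x| ≤ Cv)
    (hint1 : Integrable (fun x => g (w x) * Real.log (g (w x) / g (v x))) μ)
    (hint2 : Integrable (fun x => g (w x) - g (v x)) μ) :
    ∫ x, g (w x) * Real.log (g (w x) / g (v x)) ∂μ - ∫ x, (g (w x) - g (v x)) ∂μ ≤
      (gbar ^ 2 / κ) * (⨆ x, |w x - v x|) ^ 2 := by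
  rw [← integral_sub hint1 hint2]
  refine integral_le_of_forall_le (hint1.sub hint2) fun x => ?_
  calc g (w x) * log (g (w x) / g (v x)) - (g (w x) - g (v x))
      ≤ (g (w x) - g (v x)) ^ 2 / κ :=
        mul_log_div_sub_sub_le_sq_div_of_le hκ (hgκ _) (hgκ _)
    _ ≤ gbar ^ 2 * (⨆ y, |w y - v y|) ^ 2 / κ :=
        div_le_div_of_nonneg_right (sq_sub_le_of_abs_sub_le hg (abs_sub_le_iSup_abs_sub hw hv x))
          hκ.le
    _ = (gbar ^ 2 / κ) * (⨆ y, |w y - v y|) ^ 2 := by ring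

theorem kl_le_sup_norm_sq {X : Type*} [MeasurableSpace X] (μ : Measure X)
    [IsProbabilityMeasure μ] (κ gbar : ℝ) (hκ : 0 < κ)
    (g : ℝ → ℝ) (hg : ∀ a b : ℝ, |g a - g b| ≤ gbar * |a - b|)
    (hgκ : ∀ t : ℝ, κ ≤ g t)
    (w v : X → ℝ)
    (hmw : Measurable fun x => g (w x)) (hmv : Measurable fun x => g (v x))
    (Cw : ℝ) (hw : ∀ x, |w x| ≤ Cw) (Cv : ℝ) (hv : ∀ x, |v x| ≤ Cv)
    (hint1 : Integrable (fun x => g (w x) * Real.log (g (w x) / g (v x))) μ)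
    (hint2 : Integrable (fun x => g (w x) - g (v x)) μ) :
    ∫ x, g (w x) * Real.log (g (w x) / g (v x)) ∂μ - ∫ x, (g (w x) - g (v x)) ∂μ ≤
      (gbar ^ 2 / κ) * (⨆ x, |w x - v x|) ^ 2 :=
  kl_le_sup_norm_sq_general μ κ gbar hκ g hg hgκ w v Cw hw Cv hv hint1 hint2
end

section
/- For all a, b ≥ κ > 0: a(log(a/b))² ≤ (a−b)²/κ + |a−b|³/κ². -/
/-!
Both regimes come from `log t ≤ t - 1` applied to the larger of `a / b` and `b / a`, giving
`|log (a / b)| ≤ |a - b| / min a b`. For `a ≤ b` this yields `a log² (a / b) ≤ (a - b)² / a`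
directly. For `b ≤ a` the extra factor `a / b² = 1 / b + (a - b) / b²` is what produces the
cubic term.
-/

open Real

lemma Real.log_div_le_sub_div {x y : ℝ} (hx : 0 < x) (hy : 0 < y) :
    log (x / y) ≤ (x - y) / y :=
  div_sub_one hy.ne' ▸ log_le_sub_one_of_pos (div_pos hx hy)

lemma Real.sq_log_div_le_of_le {x y : ℝ} (hy : 0 < y) (hyx : y ≤ x) :
    log (x / y) ^ 2 ≤ ((x - y) / y) ^ 2 :=
  pow_le_pow_left₀ (log_nonneg ((one_le_div hy).2 hyx))
    (log_div_le_sub_div (hy.trans_le hyx) hy) 2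

lemma Real.mul_sq_log_div_le_of_le {a b : ℝ} (hb : 0 < b) (hba : b ≤ a) :
    a * log (a / b) ^ 2 ≤ (a - b) ^ 2 / b + (a - b) ^ 3 / b ^ 2 :=
  calc a * log (a / b) ^ 2 ≤ a * ((a - b) / b) ^ 2 :=
        mul_le_mul_of_nonneg_left (sq_log_div_le_of_le hb hba) (hb.le.trans hba)
    _ = (a - b) ^ 2 / b + (a - b) ^ 3 / b ^ 2 := by field_simp; ring

lemma Real.mul_sq_log_div_le_of_ge {a b : ℝ} (ha : 0 < a) (hab : a ≤ b) :
    a * log (a / b) ^ 2 ≤ (a - b) ^ 2 / a :=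
  calc a * log (a / b) ^ 2 = a * log (b / a) ^ 2 := by rw [← inv_div, log_inv, neg_sq]
    _ ≤ a * ((b - a) / a) ^ 2 := mul_le_mul_of_nonneg_left (sq_log_div_le_of_le ha hab) ha.le
    _ = (a - b) ^ 2 / a := by field_simp; ring

theorem pointwise_log_sq_bound (κ a b : ℝ) (hκ : 0 < κ) (ha : κ ≤ a) (hb : κ ≤ b) :
    a * (Real.log (a / b)) ^ 2 ≤ (a - b) ^ 2 / κ + |a - b| ^ 3 / κ ^ 2 := by
  rcases le_total b a with hba | hab
  · rw [abs_of_nonneg (sub_nonneg.2 hba)]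
    have hcube : 0 ≤ (a - b) ^ 3 := pow_nonneg (sub_nonneg.2 hba) 3
    calc a * log (a / b) ^ 2 ≤ (a - b) ^ 2 / b + (a - b) ^ 3 / b ^ 2 :=
          mul_sq_log_div_le_of_le (hκ.trans_le hb) hba
      _ ≤ (a - b) ^ 2 / κ + (a - b) ^ 3 / κ ^ 2 := by gcongr
  · calc a * log (a / b) ^ 2 ≤ (a - b) ^ 2 / a := mul_sq_log_div_le_of_ge (hκ.trans_le ha) hab
      _ ≤ (a - b) ^ 2 / κ := by gcongr
      _ ≤ (a - b) ^ 2 / κ + |a - b| ^ 3 / κ ^ 2 := le_add_of_nonneg_right (by positivity)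
end
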